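/- Fix s > 1. For δ > 0 let K(δ) be the number of indices k ∈ ℕ₀ with e^{(2k+1)δ} < s, let C₀(δ, s) = (coth δ/2)·(ln √s)² (the smooth approximation of the capacity at snr = s), and let llse(δ, s) = K(δ)/s (the linear least squares error of estimating the noiseless channel output under the normalization σ² = 1, θ² = 1/s, so that snr = σ²/θ² = s). Then (∂/∂s) C₀(δ, s) − (1/2)·llse(δ, s) = o(coth δ) as δ → 0+; explicitly, δ·[(coth δ/4)·(ln s)/s − K(δ)/(2s)] → 0 as δ → 0+. -/
import Mathlib


open Real Filter Set

lemma card_active (s δ : ℝ) (hs : 1 < s) (hδ : 0 < δ) :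
    Nat.card {k : ℕ | Real.exp ((2 * (k : ℝ) + 1) * δ) < s}
      = ⌈(Real.log s / δ - 1) / 2⌉₊ := by
  have hset : {k : ℕ | Real.exp ((2 * (k : ℝ) + 1) * δ) < s}
      = Set.Iio ⌈(Real.log s / δ - 1) / 2⌉₊ := by
    ext k
    simp only [Set.mem_setOf_eq, Set.mem_Iio, Nat.lt_ceil]
    rw [← Real.lt_log_iff_exp_lt (by linarith)]
    rw [lt_div_iff₀ (by norm_num : (0:ℝ) < 2), lt_sub_iff_add_lt, lt_div_iff₀ hδ]
    constructor <;> intro h <;> nlinarith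
  rw [hset, Nat.card_coe_set_eq, ← Finset.coe_Iio, Set.ncard_coe_finset,
    Nat.card_Iio]

lemma sinh_ratio : Tendsto (fun δ : ℝ => δ * (Real.cosh δ / Real.sinh δ))
    (nhdsWithin 0 (Set.Ioi 0)) (nhds 1) := by
  have h1 : Tendsto (fun δ : ℝ => Real.sinh δ / δ) (nhdsWithin 0 (Set.Ioi 0)) (nhds 1) := by
    have := (Real.hasDerivAt_sinh 0)
    rw [hasDerivAt_iff_tendsto_slope] at this
    rw [Real.cosh_zero] at this
    have h2 := this.mono_left (nhdsWithin_mono _ (fun x hx => by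
      simp only [Set.mem_compl_iff, Set.mem_singleton_iff]
      exact ne_of_gt hx))
    refine h2.congr' ?_
    filter_upwards [self_mem_nhdsWithin] with x hx
    simp [slope_def_field, Real.sinh_zero]
  have h3 : Tendsto (fun δ : ℝ => (Real.sinh δ / δ)⁻¹) (nhdsWithin 0 (Set.Ioi 0)) (nhds 1) := by
    have := h1.inv₀ (by norm_num)
    simpa using this
  have h4 : Tendsto (fun δ : ℝ => Real.cosh δ) (nhdsWithin 0 (Set.Ioi 0)) (nhds 1) := by
    have := (Real.continuous_cosh.tendsto 0)
    rw [Real.cosh_zero] at this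
    exact this.mono_left nhdsWithin_le_nhds
  have := h3.mul h4
  rw [mul_one] at this
  refine this.congr' ?_
  filter_upwards [self_mem_nhdsWithin] with x hx
  rw [inv_div]
  ring

lemma ceil_lim (s : ℝ) (hs : 1 < s) :
    Tendsto (fun δ : ℝ => δ * (⌈(Real.log s / δ - 1) / 2⌉₊ : ℝ))
      (nhdsWithin 0 (Set.Ioi 0)) (nhds (Real.log s / 2)) := by
  have hL : 0 < Real.log s := Real.log_pos hs
  have hmem : Set.Ioo (0:ℝ) (Real.log s) ∈ nhdsWithin 0 (Set.Ioi 0) :=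
    Ioo_mem_nhdsGT_of_mem (by constructor <;> simp [hL, le_refl])
  have hlow : Tendsto (fun δ : ℝ => (Real.log s - δ) / 2) (nhdsWithin 0 (Set.Ioi 0))
      (nhds (Real.log s / 2)) := by
    have : Continuous (fun δ : ℝ => (Real.log s - δ) / 2) := by continuity
    have h := (this.tendsto 0).mono_left (nhdsWithin_le_nhds (s := Set.Ioi 0))
    simpa using h
  have hup : Tendsto (fun δ : ℝ => (Real.log s + δ) / 2) (nhdsWithin 0 (Set.Ioi 0))
      (nhds (Real.log s / 2)) := by
    have : Continuous (fun δ : ℝ => (Real.log s + δ) / 2) := by continuity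
    have h := (this.tendsto 0).mono_left (nhdsWithin_le_nhds (s := Set.Ioi 0))
    simpa using h
  refine tendsto_of_tendsto_of_tendsto_of_le_of_le' hlow hup ?_ ?_
  · filter_upwards [hmem] with δ hδ
    have h1 : (Real.log s / δ - 1) / 2 ≤ ⌈(Real.log s / δ - 1) / 2⌉₊ := Nat.le_ceil _
    have h2 : δ * ((Real.log s / δ - 1) / 2) = (Real.log s - δ) / 2 := by
      field_simp [ne_of_gt hδ.1]
    nlinarith [hδ.1, mul_le_mul_of_nonneg_left h1 (le_of_lt hδ.1)]
  · filter_upwards [hmem] with δ hδ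
    have hx : 0 ≤ (Real.log s / δ - 1) / 2 := by
      have : 1 ≤ Real.log s / δ := (one_le_div hδ.1).2 (le_of_lt hδ.2)
      linarith
    have h1 : (⌈(Real.log s / δ - 1) / 2⌉₊ : ℝ) < (Real.log s / δ - 1) / 2 + 1 :=
      Nat.ceil_lt_add_one hx
    have h2 : δ * ((Real.log s / δ - 1) / 2 + 1) = (Real.log s + δ) / 2 := by
      field_simp [ne_of_gt hδ.1]; ring
    nlinarith [hδ.1, mul_le_mul_of_nonneg_left (le_of_lt h1) (le_of_lt hδ.1)]

/-- Proposition 1 of the paper (the C-LLSE formula): with `K(δ) = #{k ∈ ℕ₀ : e^{(2k+1)δ} < s}`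
the number of active subchannels, `C₀(δ,s) = (coth δ/2)·(ln √s)²` the smooth approximation of
the capacity, and `llse(δ,s) = K(δ)/s` the linear least squares error (normalization `σ² = 1`,
`θ² = 1/s`), it holds `(∂/∂s)C₀(δ,s) − (1/2)·llse(δ,s) = o(coth δ)` as `δ → 0+`; explicitly,
`δ·[(coth δ/4)·(ln s)/s − K(δ)/(2s)] → 0`. -/
theorem c_llse_formula (s : ℝ) (hs : 1 < s) :
    Filter.Tendsto
      (fun δ : ℝ =>
        δ * ((Real.cosh δ / Real.sinh δ / 4) * Real.log s / s -
          (Nat.card {k : ℕ | Real.exp ((2 * (k : ℝ) + 1) * δ) < s} : ℝ) / (2 * s)))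
      (nhdsWithin 0 (Set.Ioi 0)) (nhds 0) := by
  have hs0 : (0:ℝ) < s := lt_trans one_pos hs
  have T1 := sinh_ratio.mul_const (Real.log s / (4 * s))
  have T2 := (ceil_lim s hs).div_const (2 * s)
  have T := T1.sub T2
  have hval : 1 * (Real.log s / (4 * s)) - Real.log s / 2 / (2 * s) = 0 := by
    field_simp; ring
  rw [hval] at T
  refine T.congr' ?_
  filter_upwards [self_mem_nhdsWithin] with δ hδ
  rw [card_active s δ hs hδ]
  ring
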